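/- arXiv:math/0307006 — 2 statements merged into one kernel-verified Lean document; each statement's English description precedes it below -/
import Mathlib

section
/- Let 0 < p < 1 and let (h_k)_{k∈ℕ} be a sequence of measurable functions on ℝⁿ with ‖h_k‖_{L^{p,∞}} ≤ 1 for all k, and let (c_k) ∈ ℓ^p. Then the function g(x) = Σ_{k=1}^∞ |c_k| |h_k(x)| (with values in [0,∞]) satisfies ‖g‖_{L^{p,∞}} ≤ ((2−p)/(1−p))^{1/p} (Σ_k |c_k|^p)^{1/p}; in particular, for every λ > 0, |{x : g(x) > λ}| ≤ ((2−p)/(1−p)) λ^{−p} Σ_k |c_k|^p. -/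
open MeasureTheory Metric Set
open scoped ENNReal NNReal FourierTransform RealInnerProductSpace

noncomputable section

/-- `n`-dimensional Euclidean space. -/
abbrev Euc (n : ℕ) := EuclideanSpace ℝ (Fin n)

/-- The quasiradial Bochner–Riesz mean `R^δ_{ϱ,t} f = F⁻¹[(1 - ϱ/t)_+^δ 𝓕 f]`. -/
def brMean {n : ℕ} (ϱ : Euc n → ℝ) (δ t : ℝ) (f : Euc n → ℂ) (x : Euc n) : ℂ :=
  𝓕⁻ (fun ξ => (max (1 - ϱ ξ / t) 0 ^ δ : ℝ) • 𝓕 f ξ) x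

/-- The maximal quasiradial Bochner–Riesz operator `M^δ_ϱ`, `ℝ≥0∞`-valued. -/
def brMax {n : ℕ} (ϱ : Euc n → ℝ) (δ : ℝ) (f : Euc n → ℂ) (x : Euc n) : ℝ≥0∞ :=
  ⨆ (t : ℝ) (_ : 0 < t), (‖brMean ϱ δ t f x‖₊ : ℝ≥0∞)

/-- A `(p,μ)`-atom supported in the ball `B(x₀; s)`. -/
structure IsPAtom {n : ℕ} (p μ : ℝ) (x₀ : Euc n) (s : ℝ) (a : Euc n → ℂ) : Prop where
  rad_pos : 0 < s
  supp : ∀ x, x ∉ ball x₀ s → a x = 0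
  bdd : ∀ x, ‖a x‖ ≤ (volume (ball x₀ s)).toReal ^ (-(1 / p))
  moments : ∀ α : Fin n → ℕ, ((∑ i, α i : ℕ) : ℝ) ≤ μ →
    ∫ x : Euc n, (∏ i, (x i : ℂ) ^ α i) * a x = 0

/-- `ϱ` is an `A_t = tI`-homogeneous distance function on `ℝⁿ`,
smooth away from the origin. -/
structure IsDistFun {n : ℕ} (ϱ : Euc n → ℝ) : Prop where
  cont : Continuous ϱ
  nonneg : ∀ ξ, 0 ≤ ϱ ξ
  pos : ∀ ξ, ξ ≠ 0 → 0 < ϱ ξ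
  smooth : ContDiffOn ℝ (⊤ : ℕ∞) ϱ {(0 : Euc n)}ᶜ
  homog : ∀ t : ℝ, 0 < t → ∀ ξ, ϱ (t • ξ) = t * ϱ ξ

/-- The unit sphere `Σ_ϱ = {ϱ = 1}` is a smooth convex hypersurface of finite type `k`:
`{ϱ ≤ 1}` is convex and every tangent line has order of contact at most `k`. -/
def FiniteType {n : ℕ} (ϱ : Euc n → ℝ) (k : ℕ) : Prop :=
  Convex ℝ {ξ : Euc n | ϱ ξ ≤ 1} ∧
  ∀ ξ : Euc n, ϱ ξ = 1 → ∀ v : Euc n, ‖v‖ = 1 → ⟪v, gradient ϱ ξ⟫ = 0 →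
    ∃ j, 2 ≤ j ∧ j ≤ k ∧ iteratedDeriv j (fun t : ℝ => ϱ (ξ + t • v)) 0 ≠ 0

/-- The outer unit normal to `Σ_ϱ` at `ξ₀`. -/
def unitNormal {n : ℕ} (ϱ : Euc n → ℝ) (ξ₀ : Euc n) : Euc n :=
  ‖gradient ϱ ξ₀‖⁻¹ • gradient ϱ ξ₀

/-- The cap `B(ξ₀, s)` cut off from `Σ_ϱ` by a plane parallel to the affine tangent
plane at `ξ₀`, at distance `s` from it. -/
def cap {n : ℕ} (ϱ : Euc n → ℝ) (ξ₀ : Euc n) (s : ℝ) : Set (Euc n) :=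
  {ξ : Euc n | ϱ ξ = 1 ∧ |⟪ξ - ξ₀, unitNormal ϱ ξ₀⟫| < s}

/-- `ξf` is an inverse Gauss map for `Σ_ϱ`: for each nonzero `x`, `ξf x` is a point of
`Σ_ϱ` whose outer unit normal points in the direction of `x`. -/
def IsGaussInv {n : ℕ} (ϱ : Euc n → ℝ) (ξf : Euc n → Euc n) : Prop :=
  ∀ x : Euc n, x ≠ 0 →
    ϱ (ξf x) = 1 ∧ gradient ϱ (ξf x) = (‖gradient ϱ (ξf x)‖ * ‖x‖⁻¹) • x

/-- The function `Ω(θ) = sup_{r>0} (1+r)^{(n-1)/2} σ[B(ξ(θ), 1/r)]` from (3.1), where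
`σ` is the `(n-1)`-dimensional Hausdorff measure and `ξf` is an inverse Gauss map. -/
def Omega {n : ℕ} (ϱ : Euc n → ℝ) (ξf : Euc n → Euc n) (θ : Euc n) : ℝ≥0∞ :=
  ⨆ (r : ℝ) (_ : 0 < r),
    ENNReal.ofReal ((1 + r) ^ (((n : ℝ) - 1) / 2)) * μH[(n : ℝ) - 1] (cap ϱ (ξf θ) (1 / r))

/-- The multiplier piece `Φ^δ_k = φ(2^{k+1}(1-ϱ)) (1-ϱ)_+^δ`. -/
def Phik {n : ℕ} (ϱ : Euc n → ℝ) (φ : ℝ → ℝ) (δ : ℝ) (k : ℕ) (ξ : Euc n) : ℝ :=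
  φ (2 ^ (k + 1) * (1 - ϱ ξ)) * max (1 - ϱ ξ) 0 ^ δ

/-- The kernel `H^δ_{ϱ,k} = F⁻¹[Φ^δ_k Π]`. -/
def Hker {n : ℕ} (ϱ : Euc n → ℝ) (φ : ℝ → ℝ) (δ : ℝ) (k : ℕ) (Pcut : Euc n → ℝ)
    (x : Euc n) : ℂ :=
  𝓕⁻ (fun ξ => ((Phik ϱ φ δ k ξ * Pcut ξ : ℝ) : ℂ)) x

/-- `Π` is a degree-0 homogeneous smooth cutoff whose restriction to `Σ_ϱ` is supported
in `B(ζ₀; c₁ 2^{-k/2})`, with derivative bounds `|D^α Π| ≤ c₂ 2^{|α|k/2}` on the ring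
`1/2 ≤ ϱ ≤ 2`. -/
structure IsBump {n : ℕ} (ϱ : Euc n → ℝ) (k : ℕ) (ζ₀ : Euc n) (c₁ c₂ : ℝ)
    (Pcut : Euc n → ℝ) : Prop where
  smooth : ContDiffOn ℝ (⊤ : ℕ∞) Pcut {(0 : Euc n)}ᶜ
  homog : ∀ t : ℝ, 0 < t → ∀ ξ, Pcut (t • ξ) = Pcut ξ
  supp : ∀ ξ, ϱ ξ = 1 → ξ ∉ ball ζ₀ (c₁ * 2 ^ (-(k : ℝ) / 2)) → Pcut ξ = 0
  deriv_bound : ∀ (m : ℕ) (ξ : Euc n), 1 / 2 ≤ ϱ ξ → ϱ ξ ≤ 2 →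
    ‖iteratedFDeriv ℝ m Pcut ξ‖ ≤ c₂ * 2 ^ ((m : ℝ) * k / 2)

/-- The maximal operator `M^δ_k a(x) = sup_{t>0} |H^{δ,t} * a(x)|` associated to the
dilates `H^{δ,t}(x) = tⁿ H^δ_{ϱ,k}(tx)` of the kernel `H^δ_{ϱ,k}`. -/
def kerMax {n : ℕ} (ϱ : Euc n → ℝ) (φ : ℝ → ℝ) (δ : ℝ) (k : ℕ) (Pcut : Euc n → ℝ)
    (a : Euc n → ℂ) (x : Euc n) : ℝ≥0∞ :=
  ⨆ (t : ℝ) (_ : 0 < t),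
    (‖∫ y : Euc n, (t : ℂ) ^ n * Hker ϱ φ δ k Pcut (t • (x - y)) * a y‖₊ : ℝ≥0∞)

/-- The Gaussian curvature of `Σ_ϱ` degenerates at `ξ`: some unit tangent vector is in
the kernel of the second fundamental form, i.e. `D²ϱ(ξ)(v, w) = 0` for all tangent `w`. -/
def DegenAt {n : ℕ} (ϱ : Euc n → ℝ) (ξ : Euc n) : Prop :=
  ∃ v : Euc n, ‖v‖ = 1 ∧ ⟪v, gradient ϱ ξ⟫ = 0 ∧
    ∀ w : Euc n, ⟪w, gradient ϱ ξ⟫ = 0 → iteratedFDeriv ℝ 2 ϱ ξ ![v, w] = 0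

/-- `N(Σ_ϱ)`: the set of outer unit normals at curvature-degenerate points of `Σ_ϱ`. -/
def NSet {n : ℕ} (ϱ : Euc n → ℝ) : Set (Euc n) :=
  {θ | ∃ ξ, ϱ ξ = 1 ∧ DegenAt ϱ ξ ∧ θ = unitNormal ϱ ξ}

/-- Geodesic distance on the unit sphere from a unit vector `θ` to a set `S` of unit
vectors: the infimum of the angles `arccos ⟪θ, η⟫` over `η ∈ S`. -/
def geoDist {n : ℕ} (θ : Euc n) (S : Set (Euc n)) : ℝ :=
  sInf ((fun η => Real.arccos ⟪θ, η⟫) '' S)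

end

lemma stw_core {p lam : ℝ} (hp0 : 0 < p) (hp1 : p < 1) (hl : 0 < lam) :
    ∫⁻ t in Set.Ioc (0:ℝ) lam, ENNReal.ofReal (t ^ (-p)) =
      ENNReal.ofReal (lam ^ (1 - p) / (1 - p)) := by
  have hint : IntervalIntegrable (fun t : ℝ => t ^ (-p)) volume 0 lam :=
    intervalIntegral.intervalIntegrable_rpow' (by linarith)
  have hIoc : IntegrableOn (fun t : ℝ => t ^ (-p)) (Set.Ioc 0 lam) volume := hint.1
  have hnn : 0 ≤ᵐ[volume.restrict (Set.Ioc (0:ℝ) lam)] fun t : ℝ => t ^ (-p) :=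
    (ae_restrict_iff' measurableSet_Ioc).2
      (Filter.Eventually.of_forall fun t ht => Real.rpow_nonneg ht.1.le _)
  rw [← MeasureTheory.ofReal_integral_eq_lintegral_ofReal hIoc hnn]
  congr 1
  rw [← intervalIntegral.integral_of_le hl.le,
    integral_rpow (Or.inl (by linarith)),
    Real.zero_rpow (by linarith : -p + 1 ≠ 0), sub_zero, neg_add_eq_sub]

lemma stw_aux {α : Type*} [MeasurableSpace α] (μ : Measure α)
    (u : α → ℝ) (hu : Measurable u) (hnn : ∀ x, 0 ≤ u x)
    {p lam B : ℝ} (hp0 : 0 < p) (hp1 : p < 1) (hl : 0 < lam) (hB : 0 ≤ B)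
    (hbound : ∀ t : ℝ, 0 < t → μ {x | t < u x} ≤ ENNReal.ofReal (B * t ^ (-p))) :
    ∫⁻ x, ENNReal.ofReal (min (u x) lam) ∂μ ≤
      ENNReal.ofReal (B * (lam ^ (1 - p) / (1 - p))) := by
  have hmin : Measurable fun x => min (u x) lam := hu.min measurable_const
  rw [MeasureTheory.lintegral_eq_lintegral_meas_lt μ
    (Filter.Eventually.of_forall fun x => le_min (hnn x) hl.le) hmin.aemeasurable]
  have hgm : Measurable fun t : ℝ =>
      (Set.Ioc (0:ℝ) lam).indicator (fun t => ENNReal.ofReal (B * t ^ (-p))) t := by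
    apply Measurable.indicator _ measurableSet_Ioc
    fun_prop
  calc ∫⁻ t in Set.Ioi (0:ℝ), μ {a | t < min (u a) lam}
      ≤ ∫⁻ t in Set.Ioi (0:ℝ),
          (Set.Ioc (0:ℝ) lam).indicator (fun t => ENNReal.ofReal (B * t ^ (-p))) t := by
        apply setLIntegral_mono hgm
        intro t ht
        rcases lt_or_ge t lam with htl | htl
        · rw [Set.indicator_of_mem (show t ∈ Set.Ioc (0:ℝ) lam from ⟨ht, htl.le⟩)]
          exact (measure_mono (show {a | t < min (u a) lam} ⊆ {x | t < u x} from
            fun a (ha : t < min (u a) lam) =>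
            show t < u a from lt_of_lt_of_le ha (min_le_left _ _))).trans (hbound t ht)
        · have he : {a | t < min (u a) lam} = ∅ := by
            ext a
            simp only [mem_setOf_eq, mem_empty_iff_false, iff_false, not_lt]
            exact (min_le_right _ _).trans htl
          rw [he, measure_empty]; exact zero_le
    _ ≤ ∫⁻ t, (Set.Ioc (0:ℝ) lam).indicator
          (fun t => ENNReal.ofReal (B * t ^ (-p))) t := setLIntegral_le_lintegral _ _
    _ = ∫⁻ t in Set.Ioc (0:ℝ) lam, ENNReal.ofReal (B * t ^ (-p)) :=
        lintegral_indicator measurableSet_Ioc _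
    _ = ∫⁻ t in Set.Ioc (0:ℝ) lam, ENNReal.ofReal B * ENNReal.ofReal (t ^ (-p)) := by
        simp_rw [ENNReal.ofReal_mul hB]
    _ = ENNReal.ofReal B * ∫⁻ t in Set.Ioc (0:ℝ) lam, ENNReal.ofReal (t ^ (-p)) :=
        lintegral_const_mul' _ _ ENNReal.ofReal_ne_top
    _ = ENNReal.ofReal B * ENNReal.ofReal (lam ^ (1 - p) / (1 - p)) := by
        rw [stw_core hp0 hp1 hl]
    _ = ENNReal.ofReal (B * (lam ^ (1 - p) / (1 - p))) := (ENNReal.ofReal_mul hB).symm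


lemma stw_dist {n : ℕ} {p : ℝ}
    (h : Euc n → ℂ)
    (hwk : ∀ lam : ℝ, 0 < lam →
      volume {x : Euc n | lam < ‖h x‖} ≤ ENNReal.ofReal (lam ^ (-p)))
    (ck : ℝ) (t : ℝ) (ht : 0 < t) :
    volume {x : Euc n | t < |ck| * ‖h x‖} ≤ ENNReal.ofReal (|ck| ^ p * t ^ (-p)) := by
  by_cases hc : ck = 0
  · have he : {x : Euc n | t < |ck| * ‖h x‖} = ∅ := by
      ext x
      simp only [hc, abs_zero, zero_mul, mem_setOf_eq, mem_empty_iff_false, iff_false, not_lt]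
      exact ht.le
    rw [he, measure_empty]; exact zero_le
  · have hca : 0 < |ck| := abs_pos.2 hc
    have hset : {x : Euc n | t < |ck| * ‖h x‖} = {x : Euc n | t / |ck| < ‖h x‖} := by
      ext x
      simp only [mem_setOf_eq]
      rw [div_lt_iff₀ hca, mul_comm]
    rw [hset]
    refine (hwk _ (div_pos ht hca)).trans (le_of_eq ?_)
    rw [div_eq_mul_inv, Real.mul_rpow ht.le (inv_nonneg.2 hca.le),
      Real.inv_rpow hca.le, Real.rpow_neg hca.le, inv_inv, mul_comm]

/-- Lemma 3.3, Stein–Taibleson–Weiss: summing weak-type functions.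
If `‖h_k‖_{L^{p,∞}} ≤ 1` for all `k` and `(c_k) ∈ ℓ^p`, `0 < p < 1`, then
`g = Σ_k |c_k||h_k|` satisfies `‖g‖_{L^{p,∞}}^p ≤ (2-p)/(1-p) · Σ_k |c_k|^p`. -/
theorem sum_of_weak_type_functions
    {n : ℕ} (p : ℝ) (hp0 : 0 < p) (hp1 : p < 1)
    (h : ℕ → Euc n → ℂ) (hmeas : ∀ k, Measurable (h k))
    (hwk : ∀ (k : ℕ) (lam : ℝ), 0 < lam →
      volume {x : Euc n | lam < ‖h k x‖} ≤ ENNReal.ofReal (lam ^ (-p)))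
    (c : ℕ → ℝ) (hc : Summable (fun k => |c k| ^ p)) :
    ∀ lam : ℝ, 0 < lam →
      volume {x : Euc n |
          ENNReal.ofReal lam < ∑' k, ENNReal.ofReal |c k| * (‖h k x‖₊ : ℝ≥0∞)}
        ≤ ENNReal.ofReal ((2 - p) / (1 - p) * lam ^ (-p) * ∑' k, |c k| ^ p) := by
  intro lam hl
  have h1p : (0:ℝ) < 1 - p := by linarith
  set A : ℝ := ∑' k, |c k| ^ p with hA
  have hA0 : 0 ≤ A := tsum_nonneg fun k => Real.rpow_nonneg (abs_nonneg _) _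
  set f : ℕ → Euc n → ℝ≥0∞ := fun k x => ENNReal.ofReal |c k| * (‖h k x‖₊ : ℝ≥0∞) with hf
  -- rewrite f as ofReal of real product
  have hfr : ∀ k x, f k x = ENNReal.ofReal (|c k| * ‖h k x‖) := by
    intro k x
    rw [ENNReal.ofReal_mul (abs_nonneg _), ofReal_norm, enorm_eq_nnnorm]
  have hfm : ∀ k, Measurable (f k) := by
    intro k
    exact ((hmeas k).nnnorm.coe_nnreal_ennreal).const_mul _
  -- the truncated sum
  set F : Euc n → ℝ≥0∞ := fun x => ∑' k, min (f k x) (ENNReal.ofReal lam) with hF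
  have hFm : Measurable F := Measurable.ennreal_tsum fun k => (hfm k).min measurable_const
  -- set inclusion
  have hincl : {x : Euc n | ENNReal.ofReal lam < ∑' k, f k x} ⊆
      (⋃ k, {x : Euc n | ENNReal.ofReal lam < f k x}) ∪
        {x : Euc n | ENNReal.ofReal lam < F x} := by
    intro x hx
    by_cases hx2 : ∃ k, ENNReal.ofReal lam < f k x
    · exact Or.inl (mem_iUnion.2 ⟨hx2.choose, hx2.choose_spec⟩)
    · push_neg at hx2
      refine Or.inr ?_
      have : F x = ∑' k, f k x := tsum_congr fun k => min_eq_left (hx2 k)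
      simpa [this] using hx
  -- bound for each piece of the union
  have hb1 : ∀ k, volume {x : Euc n | ENNReal.ofReal lam < f k x} ≤
      ENNReal.ofReal (|c k| ^ p * lam ^ (-p)) := by
    intro k
    have hset : {x : Euc n | ENNReal.ofReal lam < f k x} =
        {x : Euc n | lam < |c k| * ‖h k x‖} := by
      ext x
      simp only [mem_setOf_eq, hfr k x]
      exact ENNReal.ofReal_lt_ofReal_iff_of_nonneg hl.le
    rw [hset]
    exact stw_dist (h k) (hwk k) (c k) lam hl
  have hb1' : volume (⋃ k, {x : Euc n | ENNReal.ofReal lam < f k x}) ≤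
      ENNReal.ofReal (lam ^ (-p) * A) := by
    refine (measure_iUnion_le _).trans ?_
    refine (ENNReal.tsum_le_tsum hb1).trans (le_of_eq ?_)
    rw [← ENNReal.ofReal_tsum_of_nonneg
      (fun k => mul_nonneg (Real.rpow_nonneg (abs_nonneg _) _)
        (Real.rpow_nonneg hl.le _)) (hc.mul_right _)]
    congr 1
    rw [tsum_mul_right, mul_comm]
  -- bound for the truncated part
  have hb2 : ∫⁻ x, F x ≤ ENNReal.ofReal (A * (lam ^ (1 - p) / (1 - p))) := by
    rw [hF, lintegral_tsum fun k => ((hfm k).min measurable_const).aemeasurable]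
    have hbk : ∀ k, ∫⁻ x, min (f k x) (ENNReal.ofReal lam) ≤
        ENNReal.ofReal (|c k| ^ p * (lam ^ (1 - p) / (1 - p))) := by
      intro k
      have heq : ∀ x, min (f k x) (ENNReal.ofReal lam) =
          ENNReal.ofReal (min (|c k| * ‖h k x‖) lam) := by
        intro x
        rw [hfr k x]
        rcases le_total (|c k| * ‖h k x‖) lam with hle | hle
        · rw [min_eq_left hle, min_eq_left (ENNReal.ofReal_le_ofReal hle)]
        · rw [min_eq_right hle, min_eq_right (ENNReal.ofReal_le_ofReal hle)]
      simp_rw [heq]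
      exact stw_aux volume _ ((measurable_const.mul (hmeas k).norm))
        (fun x => mul_nonneg (abs_nonneg _) (norm_nonneg _)) hp0 hp1 hl
        (Real.rpow_nonneg (abs_nonneg _) _)
        (fun t ht => stw_dist (h k) (hwk k) (c k) t ht)
    refine (ENNReal.tsum_le_tsum hbk).trans (le_of_eq ?_)
    rw [← ENNReal.ofReal_tsum_of_nonneg
      (fun k => mul_nonneg (Real.rpow_nonneg (abs_nonneg _) _)
        (div_nonneg (Real.rpow_nonneg hl.le _) h1p.le)) (hc.mul_right _)]
    congr 1
    rw [tsum_mul_right]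
  have hb2' : volume {x : Euc n | ENNReal.ofReal lam < F x} ≤
      ENNReal.ofReal (lam ^ (-p) / (1 - p) * A) := by
    have hlne : ENNReal.ofReal lam ≠ 0 := (ENNReal.ofReal_pos.2 hl).ne'
    have cheb := mul_meas_ge_le_lintegral₀ (μ := volume) hFm.aemeasurable (ENNReal.ofReal lam)
    have hsub : volume {x : Euc n | ENNReal.ofReal lam < F x} ≤
        volume {x : Euc n | ENNReal.ofReal lam ≤ F x} :=
      measure_mono fun x (hx : ENNReal.ofReal lam < F x) =>
        show ENNReal.ofReal lam ≤ F x from le_of_lt hx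
    have key : volume {x : Euc n | ENNReal.ofReal lam ≤ F x} ≤
        (ENNReal.ofReal lam)⁻¹ * ∫⁻ x, F x := by
      rw [← one_mul (volume _), ← ENNReal.inv_mul_cancel hlne ENNReal.ofReal_ne_top,
        mul_assoc]
      exact mul_le_mul_right cheb _
    refine hsub.trans (key.trans ?_)
    refine (mul_le_mul_right hb2 _).trans (le_of_eq ?_)
    rw [← ENNReal.ofReal_inv_of_pos hl, ← ENNReal.ofReal_mul (inv_nonneg.2 hl.le)]
    congr 1
    rw [show lam⁻¹ = lam ^ (-1 : ℝ) by rw [Real.rpow_neg_one]]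
    rw [show lam ^ (-1:ℝ) * (A * (lam ^ (1-p) / (1-p))) =
      (lam ^ (-1:ℝ) * lam ^ (1-p)) / (1-p) * A by ring]
    rw [← Real.rpow_add hl, show (-1:ℝ) + (1 - p) = -p by ring]
  -- combine
  calc volume {x : Euc n | ENNReal.ofReal lam < ∑' k, f k x}
      ≤ volume ((⋃ k, {x : Euc n | ENNReal.ofReal lam < f k x}) ∪
          {x : Euc n | ENNReal.ofReal lam < F x}) := measure_mono hincl
    _ ≤ volume (⋃ k, {x : Euc n | ENNReal.ofReal lam < f k x}) +
          volume {x : Euc n | ENNReal.ofReal lam < F x} := measure_union_le _ _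
    _ ≤ ENNReal.ofReal (lam ^ (-p) * A) + ENNReal.ofReal (lam ^ (-p) / (1 - p) * A) :=
          add_le_add hb1' hb2'
    _ = ENNReal.ofReal (lam ^ (-p) * A + lam ^ (-p) / (1 - p) * A) :=
          (ENNReal.ofReal_add (mul_nonneg (Real.rpow_nonneg hl.le _) hA0)
            (mul_nonneg (div_nonneg (Real.rpow_nonneg hl.le _) h1p.le) hA0)).symm
    _ = ENNReal.ofReal ((2 - p) / (1 - p) * lam ^ (-p) * A) := by
          congr 1
          field_simp
          ring
end

section
/- Assume Σ_ϱ is a smooth convex hypersurface of finite type k for some k ≥ 2. Then there is a constant C = C(Σ_ϱ) > 0 such that for every 0 < s ≤ 1, every y ∈ ℝⁿ with |y| < s, and every x ∈ ℝⁿ with |x| ≥ 2s, the point ξ(x−y) lies in the cap B(ξ(x), C/|x|); that is, dist(ξ(x−y), T_{ξ(x)}(Σ_ϱ)) < C/|x|. -/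
open MeasureTheory Metric Set
open scoped ENNReal NNReal FourierTransform RealInnerProductSpace

namespace Aux

variable {n : ℕ} {ϱ : Euc n → ℝ}

lemma rho_zero (hϱ : IsDistFun ϱ) : ϱ 0 = 0 := by
  have := hϱ.homog 2 two_pos 0
  simp only [smul_zero] at this
  linarith

lemma homog' (hϱ : IsDistFun ϱ) {t : ℝ} (ht : 0 ≤ t) (ξ : Euc n) :
    ϱ (t • ξ) = t * ϱ ξ := by
  rcases ht.lt_or_eq with h | h
  · exact hϱ.homog t h ξ
  · simp [← h, rho_zero hϱ]

lemma diffAt (hϱ : IsDistFun ϱ) {ξ : Euc n} (hξ : ξ ≠ 0) :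
    DifferentiableAt ℝ ϱ ξ := by
  have : ContDiffAt ℝ (⊤ : ℕ∞) ϱ ξ :=
    hϱ.smooth.contDiffAt (isOpen_compl_singleton.mem_nhds hξ)
  exact this.differentiableAt (by simp)

/-- Subadditivity from convexity of sublevel set. -/
lemma subadd (hϱ : IsDistFun ϱ) (hK : Convex ℝ {ξ : Euc n | ϱ ξ ≤ 1})
    (a b : Euc n) : ϱ (a + b) ≤ ϱ a + ϱ b := by
  rcases eq_or_ne a 0 with rfl | ha
  · simp [rho_zero hϱ]
  rcases eq_or_ne b 0 with rfl | hb
  · simp [rho_zero hϱ]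
  set ta := ϱ a with hta
  set tb := ϱ b with htb
  have hta0 : 0 < ta := hϱ.pos a ha
  have htb0 : 0 < tb := hϱ.pos b hb
  have hT : 0 < ta + tb := by linarith
  have hu : ϱ (ta⁻¹ • a) ≤ 1 := by
    rw [homog' hϱ (by positivity)]; rw [inv_mul_cancel₀ hta0.ne']
  have hv : ϱ (tb⁻¹ • b) ≤ 1 := by
    rw [homog' hϱ (by positivity)]; rw [inv_mul_cancel₀ htb0.ne']
  have hmem := hK (mem_setOf.2 hu) (mem_setOf.2 hv)
    (by positivity : (0:ℝ) ≤ ta / (ta + tb)) (by positivity : (0:ℝ) ≤ tb / (ta + tb))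
    (by field_simp : ta / (ta + tb) + tb / (ta + tb) = 1)
  have heq : (ta / (ta + tb)) • (ta⁻¹ • a) + (tb / (ta + tb)) • (tb⁻¹ • b)
      = (ta + tb)⁻¹ • (a + b) := by
    rw [smul_smul, smul_smul, smul_add]
    congr 2 <;> field_simp <;> ring
  rw [heq] at hmem
  have : ϱ ((ta + tb)⁻¹ • (a + b)) = (ta + tb)⁻¹ * ϱ (a + b) :=
    homog' hϱ (by positivity) _
  rw [mem_setOf, this] at hmem
  calc ϱ (a + b) = (ta + tb) * ((ta + tb)⁻¹ * ϱ (a + b)) := by field_simp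
    _ ≤ (ta + tb) * 1 := by apply mul_le_mul_of_nonneg_left hmem hT.le
    _ = ta + tb := by ring

lemma convexOn (hϱ : IsDistFun ϱ) (hK : Convex ℝ {ξ : Euc n | ϱ ξ ≤ 1}) :
    ConvexOn ℝ univ ϱ := by
  refine ⟨convex_univ, fun a _ b _ la lb hla hlb _ => ?_⟩
  calc ϱ (la • a + lb • b) ≤ ϱ (la • a) + ϱ (lb • b) := subadd hϱ hK _ _
    _ = la * ϱ a + lb * ϱ b := by rw [homog' hϱ hla, homog' hϱ hlb]

lemma inner_gradient (hϱ : IsDistFun ϱ) {ξ : Euc n} (hξ : ξ ≠ 0) (v : Euc n) :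
    ⟪gradient ϱ ξ, v⟫ = fderiv ℝ ϱ ξ v := by
  have h := (diffAt hϱ hξ).hasGradientAt
  rw [hasGradientAt_iff_hasFDerivAt] at h
  rw [h.fderiv]
  rfl

/-- Euler's relation. -/
lemma euler (hϱ : IsDistFun ϱ) {ξ : Euc n} (hξ : ξ ≠ 0) :
    ⟪gradient ϱ ξ, ξ⟫ = ϱ ξ := by
  rw [inner_gradient hϱ hξ]
  have hd : HasFDerivAt ϱ (fderiv ℝ ϱ ξ) ξ := (diffAt hϱ hξ).hasFDerivAt
  have hline : HasDerivAt (fun t : ℝ => t • ξ) ξ 1 := by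
    simpa using (hasDerivAt_id (1:ℝ)).smul_const ξ
  have hcomp : HasDerivAt (fun t : ℝ => ϱ (t • ξ)) (fderiv ℝ ϱ ξ ξ) 1 := by
    have hd' : HasFDerivAt ϱ (fderiv ℝ ϱ ξ) ((1:ℝ) • ξ) := by simpa using hd
    exact hd'.comp_hasDerivAt (x := (1:ℝ)) hline
  have hcomp2 : HasDerivAt (fun t : ℝ => ϱ (t • ξ)) (ϱ ξ) 1 := by
    have h2 : HasDerivAt (fun t : ℝ => t * ϱ ξ) (ϱ ξ) 1 := by
      simpa using (hasDerivAt_id (1:ℝ)).mul_const (ϱ ξ)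
    apply h2.congr_of_eventuallyEq
    filter_upwards [eventually_gt_nhds (by norm_num : (0:ℝ) < 1)] with t ht
    exact hϱ.homog t ht ξ
  exact (hcomp2.unique hcomp).symm

/-- Supporting hyperplane inequality. -/
lemma support (hϱ : IsDistFun ϱ) (hK : Convex ℝ {ξ : Euc n | ϱ ξ ≤ 1})
    {ξ z : Euc n} (hξ : ϱ ξ = 1) (hz : ϱ z ≤ 1) :
    ⟪gradient ϱ ξ, z - ξ⟫ ≤ 0 := by
  have hξ0 : ξ ≠ 0 := by
    intro h; rw [h, rho_zero hϱ] at hξ; norm_num at hξ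
  rw [inner_gradient hϱ hξ0]
  set g : ℝ → ℝ := fun t => ϱ (ξ + t • (z - ξ)) with hg
  have hgconv : ConvexOn ℝ univ g := by
    have := (convexOn hϱ hK).comp_affineMap (AffineMap.lineMap ξ z)
    have heq : ϱ ∘ (AffineMap.lineMap ξ z) = g := by
      funext t
      simp [g, AffineMap.lineMap_apply, add_comm]
    rw [heq] at this
    simpa using this
  have hd : HasFDerivAt ϱ (fderiv ℝ ϱ ξ) ξ := (diffAt hϱ hξ0).hasFDerivAt
  have hline : HasDerivAt (fun t : ℝ => ξ + t • (z - ξ)) (z - ξ) 0 := by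
    simpa using ((hasDerivAt_id (0:ℝ)).smul_const (z - ξ)).const_add ξ
  have hder : HasDerivAt g (fderiv ℝ ϱ ξ (z - ξ)) 0 := by
    have hd' : HasFDerivAt ϱ (fderiv ℝ ϱ ξ) (ξ + (0:ℝ) • (z - ξ)) := by simpa using hd
    exact hd'.comp_hasDerivAt (x := (0:ℝ)) hline
  have hs := hgconv.le_slope_of_hasDerivAt (mem_univ 0) (mem_univ 1)
    (by norm_num) hder
  have : slope g 0 1 = ϱ z - 1 := by
    simp [slope_def_field, g, hξ]
  rw [this] at hs
  linarith

/-- Direction difference bound. -/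
lemma dir_bound {x z : Euc n} (hx : x ≠ 0) (hz : z ≠ 0) :
    ‖‖x‖⁻¹ • x - ‖z‖⁻¹ • z‖ ≤ 2 * ‖x - z‖ / ‖x‖ := by
  have hx0 : (0:ℝ) < ‖x‖ := norm_pos_iff.2 hx
  have hz0 : (0:ℝ) < ‖z‖ := norm_pos_iff.2 hz
  have hsplit : ‖x‖⁻¹ • x - ‖z‖⁻¹ • z
      = ‖x‖⁻¹ • (x - z) + (‖x‖⁻¹ - ‖z‖⁻¹) • z := by module
  rw [hsplit]
  have h1 : ‖‖x‖⁻¹ • (x - z)‖ = ‖x - z‖ / ‖x‖ := by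
    rw [norm_smul]; simp [abs_of_pos (inv_pos.2 hx0), div_eq_inv_mul]
  have h2 : ‖(‖x‖⁻¹ - ‖z‖⁻¹) • z‖ ≤ ‖x - z‖ / ‖x‖ := by
    rw [norm_smul, Real.norm_eq_abs]
    have heq : ‖x‖⁻¹ - ‖z‖⁻¹ = (‖z‖ - ‖x‖) / (‖x‖ * ‖z‖) := by field_simp
    rw [heq, abs_div, abs_of_pos (mul_pos hx0 hz0)]
    have hle : |‖z‖ - ‖x‖| ≤ ‖x - z‖ := by
      rw [← norm_sub_rev]; exact abs_norm_sub_norm_le z x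
    calc |‖z‖ - ‖x‖| / (‖x‖ * ‖z‖) * ‖z‖ = |‖z‖ - ‖x‖| / ‖x‖ := by field_simp
      _ ≤ ‖x - z‖ / ‖x‖ := by gcongr
  calc ‖‖x‖⁻¹ • (x - z) + (‖x‖⁻¹ - ‖z‖⁻¹) • z‖
      ≤ ‖‖x‖⁻¹ • (x - z)‖ + ‖(‖x‖⁻¹ - ‖z‖⁻¹) • z‖ := norm_add_le _ _
    _ ≤ ‖x - z‖ / ‖x‖ + ‖x - z‖ / ‖x‖ := by rw [h1]; linarith
    _ = 2 * ‖x - z‖ / ‖x‖ := by ring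

end Aux

namespace Aux

lemma exists_bound (hn : 0 < n) (hϱ : IsDistFun (ϱ := ϱ)) :
    ∃ M : ℝ, 0 < M ∧ ∀ ξ : Euc n, ϱ ξ = 1 → ‖ξ‖ ≤ M := by
  have hne : (sphere (0 : Euc n) 1).Nonempty := by
    refine ⟨EuclideanSpace.single (⟨0, hn⟩ : Fin n) (1:ℝ), ?_⟩
    simp [EuclideanSpace.norm_single]
  obtain ⟨z, hz, hmin⟩ := (isCompact_sphere (0 : Euc n) 1).exists_isMinOn hne
    hϱ.cont.continuousOn
  have hz0 : z ≠ 0 := by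
    intro h; rw [h] at hz; simp at hz
  have hm : 0 < ϱ z := hϱ.pos z hz0
  refine ⟨(ϱ z)⁻¹, inv_pos.2 hm, fun ξ hξ => ?_⟩
  have hξ0 : ξ ≠ 0 := by
    intro h; rw [h, rho_zero hϱ] at hξ; norm_num at hξ
  have hnξ : 0 < ‖ξ‖ := norm_pos_iff.2 hξ0
  have hmem : ‖ξ‖⁻¹ • ξ ∈ sphere (0 : Euc n) 1 := by
    simp [norm_smul, abs_of_pos (inv_pos.2 hnξ), inv_mul_cancel₀ hnξ.ne']
  have h1 : ϱ z ≤ ϱ (‖ξ‖⁻¹ • ξ) := hmin hmem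
  have h2 : ϱ (‖ξ‖⁻¹ • ξ) = ‖ξ‖⁻¹ * ϱ ξ := homog' hϱ (by positivity) ξ
  rw [h2, hξ, mul_one] at h1
  have := inv_anti₀ hm h1
  rwa [inv_inv] at this

end Aux


/-- Lemma 3.5: if `Σ_ϱ` is a smooth convex hypersurface of finite
type, then there is `C = C(Σ_ϱ) > 0` such that for `0 < s ≤ 1`, `|y| < s` and
`|x| ≥ 2s`, the point `ξ(x - y)` lies in the cap `B(ξ(x), C/|x|)`. -/
theorem gauss_preimage_in_cap
    {n : ℕ} (hn : 2 ≤ n) (ϱ : Euc n → ℝ) (hϱ : IsDistFun ϱ)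
    (k : ℕ) (hk : 2 ≤ k) (hft : FiniteType ϱ k)
    (ξf : Euc n → Euc n) (hξf : IsGaussInv ϱ ξf) :
    ∃ C : ℝ, 0 < C ∧ ∀ s : ℝ, 0 < s → s ≤ 1 →
      ∀ y : Euc n, ‖y‖ < s → ∀ x : Euc n, 2 * s ≤ ‖x‖ →
        ξf (x - y) ∈ cap ϱ (ξf x) (C / ‖x‖) := by
  obtain ⟨M, hM, hMb⟩ := Aux.exists_bound (by omega : 0 < n) hϱ
  refine ⟨4 * M + 1, by positivity, ?_⟩
  intro s hs hs1 y hy x hx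
  have hx0 : (0:ℝ) < ‖x‖ := by linarith
  have hxne : x ≠ 0 := norm_pos_iff.1 hx0
  have hw0 : (0:ℝ) < ‖x - y‖ := by
    have h := norm_sub_norm_le x y
    linarith
  have hwne : x - y ≠ 0 := norm_pos_iff.1 hw0
  obtain ⟨hSx, hgx⟩ := hξf x hxne
  obtain ⟨hSw, hgw⟩ := hξf (x - y) hwne
  have hξx0 : ξf x ≠ 0 := by
    intro h; rw [h, Aux.rho_zero hϱ] at hSx; norm_num at hSx
  have hξw0 : ξf (x - y) ≠ 0 := by
    intro h; rw [h, Aux.rho_zero hϱ] at hSw; norm_num at hSw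
  have hgx0 : gradient ϱ (ξf x) ≠ 0 := by
    intro h
    have he := Aux.euler hϱ hξx0
    rw [h, inner_zero_left, hSx] at he
    norm_num at he
  have hgw0 : gradient ϱ (ξf (x - y)) ≠ 0 := by
    intro h
    have he := Aux.euler hϱ hξw0
    rw [h, inner_zero_left, hSw] at he
    norm_num at he
  have hngx : (0:ℝ) < ‖gradient ϱ (ξf x)‖ := norm_pos_iff.2 hgx0
  have hngw : (0:ℝ) < ‖gradient ϱ (ξf (x - y))‖ := norm_pos_iff.2 hgw0
  -- the unit normal at ξf x is x/‖x‖
  have hun : unitNormal ϱ (ξf x) = ‖x‖⁻¹ • x := by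
    rw [unitNormal]
    have h1 : ‖gradient ϱ (ξf x)‖⁻¹ • gradient ϱ (ξf x)
        = ‖gradient ϱ (ξf x)‖⁻¹ • ((‖gradient ϱ (ξf x)‖ * ‖x‖⁻¹) • x) := by
      rw [← hgx]
    rw [h1, smul_smul]
    have : ‖gradient ϱ (ξf x)‖⁻¹ * (‖gradient ϱ (ξf x)‖ * ‖x‖⁻¹) = ‖x‖⁻¹ := by
      field_simp
    rw [this]
  -- supporting hyperplane inequalities
  have hA : ⟪x, ξf (x - y) - ξf x⟫ ≤ 0 := by
    have h1 := Aux.support hϱ hft.1 hSx (le_of_eq hSw)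
    rw [hgx, real_inner_smul_left] at h1
    have hc : (0:ℝ) < ‖gradient ϱ (ξf x)‖ * ‖x‖⁻¹ := by positivity
    nlinarith
  have hB : ⟪x - y, ξf x - ξf (x - y)⟫ ≤ 0 := by
    have h1 := Aux.support hϱ hft.1 hSw (le_of_eq hSx)
    rw [hgw, real_inner_smul_left] at h1
    have hc : (0:ℝ) < ‖gradient ϱ (ξf (x - y))‖ * ‖x - y‖⁻¹ := by positivity
    nlinarith
  -- assemble
  refine ⟨hSw, ?_⟩
  rw [hun]
  set ξx := ξf x
  set ξw := ξf (x - y)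
  set θx : Euc n := ‖x‖⁻¹ • x with hθx
  set θw : Euc n := ‖x - y‖⁻¹ • (x - y) with hθw
  have hinner_nonpos : ⟪ξw - ξx, θx⟫ ≤ 0 := by
    rw [hθx, real_inner_smul_right]
    have : ⟪ξw - ξx, x⟫ ≤ 0 := by rw [real_inner_comm]; exact hA
    have hxinv : (0:ℝ) ≤ ‖x‖⁻¹ := by positivity
    exact mul_nonpos_of_nonneg_of_nonpos hxinv this
  rw [abs_of_nonpos hinner_nonpos]
  have hkey : -⟪ξw - ξx, θx⟫ = ⟪ξx - ξw, θx - θw⟫ + ⟪ξx - ξw, θw⟫ := by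
    rw [← inner_add_right]
    rw [show θx - θw + θw = θx by abel]
    rw [show ξx - ξw = -(ξw - ξx) by abel, inner_neg_left]
  have hsecond : ⟪ξx - ξw, θw⟫ ≤ 0 := by
    rw [hθw, real_inner_smul_right, real_inner_comm]
    have hwinv : (0:ℝ) ≤ ‖x - y‖⁻¹ := by positivity
    exact mul_nonpos_of_nonneg_of_nonpos hwinv hB
  have hfirst : ⟪ξx - ξw, θx - θw⟫ ≤ 2 * M * (2 * ‖y‖ / ‖x‖) := by
    calc ⟪ξx - ξw, θx - θw⟫ ≤ ‖ξx - ξw‖ * ‖θx - θw‖ := real_inner_le_norm _ _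
      _ ≤ (2 * M) * (2 * ‖y‖ / ‖x‖) := by
          apply mul_le_mul
          · calc ‖ξx - ξw‖ ≤ ‖ξx‖ + ‖ξw‖ := norm_sub_le _ _
              _ ≤ M + M := add_le_add (hMb _ hSx) (hMb _ hSw)
              _ = 2 * M := by ring
          · have := Aux.dir_bound hxne hwne
            rwa [show x - (x - y) = y by abel] at this
          · exact norm_nonneg _
          · positivity
  have hfin : -⟪ξw - ξx, θx⟫ ≤ 4 * M * ‖y‖ / ‖x‖ := by
    rw [hkey]
    have : 2 * M * (2 * ‖y‖ / ‖x‖) = 4 * M * ‖y‖ / ‖x‖ := by ring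
    linarith [hfirst, hsecond]
  have hlast : 4 * M * ‖y‖ / ‖x‖ < (4 * M + 1) / ‖x‖ := by
    rw [div_lt_div_iff₀ hx0 hx0]
    have h1 : ‖y‖ < 1 := lt_of_lt_of_le hy hs1
    nlinarith [mul_pos (by linarith : (0:ℝ) < 1 - ‖y‖) (by positivity : (0:ℝ) < 4 * M * ‖x‖), hx0]
  exact lt_of_le_of_lt hfin hlast
end
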